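/- arXiv:2107.06567 — 8 statements merged into one kernel-verified Lean document; each statement's English description precedes it below -/
import Mathlib

section
/- Let (Φ,X) be a flow and S ⊂ X be topologically transversal to Φ. If x ∈ S, then there exist no sequences xₙ ∈ S and tₙ > 0 with xₙ → x, tₙ → 0, and Φ(xₙ,tₙ) ∈ S for all n. -/
open Set Function Topology

structure FlowLaw {X : Type*} [TopologicalSpace X] (Φ : X → ℝ → X) : Prop where
  cont : Continuous fun p : X × ℝ => Φ p.1 p.2
  map_zero : ∀ x, Φ x 0 = x
  map_add : ∀ x t s, Φ (Φ x t) s = Φ x (t + s)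

/-- `S` is topologically transversal to the flow `Φ` on an `(n+1)`-dimensional
topological manifold: `S` is a codimension-one locally flat submanifold (via flow-box
like charts onto the unit ball sending `S` to the hyperplane slice), with locally
uniform entry/exit time bounds `δ₊ > 0 > δ₋` such that the short forward and backward
orbit segments lie in different connected components of `U \ S` and meet `S` only at the
base point; moreover `Φ(y,[a,b]) ∩ S` is compact for all `y, a, b`. -/
structure IsTransversal {X : Type*} [TopologicalSpace X] (n : ℕ)
    (Φ : X → ℝ → X) (S : Set X) : Prop where
  compact_inter : ∀ y : X, ∀ a b : ℝ, IsCompact ((fun t => Φ y t) '' Set.Icc a b ∩ S)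
  trans : ∃ δp δm : X → ℝ,
    (∀ x ∈ S, 0 < δp x ∧ δm x < 0) ∧
    ∀ x ∈ S, ∃ U : Set X, IsOpen U ∧ x ∈ U ∧
      (∃ φ : ↥U ≃ₜ ↥(Metric.ball (0 : EuclideanSpace ℝ (Fin (n+1))) 1),
        ∀ y : U, (y : X) ∈ S ↔ (φ y : EuclideanSpace ℝ (Fin (n+1))) (Fin.last n) = 0) ∧
      (∀ t ∈ Set.Icc (δm x) (δp x), t ≠ 0 → Φ x t ∈ U \ S) ∧
      connectedComponentIn (U \ S) (Φ x (δm x)) ≠ connectedComponentIn (U \ S) (Φ x (δp x)) ∧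
      (∃ V ⊆ U, IsOpen V ∧ x ∈ V ∧ ∃ δ > 0, ∀ y ∈ V ∩ S, δ < δp y ∧ δm y < -δ)

/-! Near `x`, every `y ∈ S` leaves `S` along its orbit for a time longer than the uniform
lower bound `δ` on `δ₊`, so returns to `S` from points close to `x` take time at least `δ`. -/

namespace IsTransversal

variable {X : Type*} [TopologicalSpace X] {n : ℕ} {Φ : X → ℝ → X} {S : Set X}

theorem exists_pos_eventually_flow_notMem (htr : IsTransversal n Φ S) {x : X} (hx : x ∈ S) :
    ∃ δ > 0, ∀ᶠ y in 𝓝 x, y ∈ S → ∀ t ∈ Ioc 0 δ, Φ y t ∉ S := by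
  obtain ⟨δp, δm, hsign, hchart⟩ := htr.trans
  obtain ⟨-, -, -, -, -, -, V, -, hVo, hxV, δ, hδ, hV⟩ := hchart x hx
  refine ⟨δ, hδ, ?_⟩
  filter_upwards [hVo.mem_nhds hxV] with y hyV hyS t ht
  obtain ⟨U, -, -, -, hseg, -⟩ := hchart y hyS
  have hδm : δm y < t := (hsign y hyS).2.trans ht.1
  have hδp : t ≤ δp y := ht.2.trans (hV y ⟨hyV, hyS⟩).1.le
  exact (hseg t ⟨hδm.le, hδp⟩ ht.1.ne').2

end IsTransversal

theorem no_frequent_returns_general {X : Type*} [TopologicalSpace X] {n : ℕ} (Φ : X → ℝ → X) (S : Set X)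
    (htr : IsTransversal n Φ S) {x : X} (hx : x ∈ S) :
    ¬ ∃ (xs : ℕ → X) (ts : ℕ → ℝ), (∀ k, xs k ∈ S) ∧ (∀ k, 0 < ts k) ∧
      Filter.Tendsto xs Filter.atTop (nhds x) ∧
      Filter.Tendsto ts Filter.atTop (nhds 0) ∧
      ∀ k, Φ (xs k) (ts k) ∈ S := by
  rintro ⟨xs, ts, hS, hpos, hxlim, htlim, hret⟩
  obtain ⟨δ, hδ, hnear⟩ := htr.exists_pos_eventually_flow_notMem hx
  obtain ⟨k, hk, hkδ⟩ :=
    ((hxlim.eventually hnear).and (htlim.eventually (Iic_mem_nhds hδ))).exists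
  exact hk (hS k) (ts k) ⟨hpos k, hkδ⟩ (hret k)

/-- if `S` is topologically transversal to the flow `Φ` and `x ∈ S`, there
are no sequences `xₙ ∈ S`, `tₙ > 0` with `xₙ → x`, `tₙ → 0` and `Φ(xₙ,tₙ) ∈ S`. -/
theorem no_frequent_returns {X : Type*} [TopologicalSpace X] [T2Space X]
    [SecondCountableTopology X] {n : ℕ} (Φ : X → ℝ → X) (S : Set X)
    (law : FlowLaw Φ) (htr : IsTransversal n Φ S) {x : X} (hx : x ∈ S) :
    ¬ ∃ (xs : ℕ → X) (ts : ℕ → ℝ), (∀ k, xs k ∈ S) ∧ (∀ k, 0 < ts k) ∧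
      Filter.Tendsto xs Filter.atTop (nhds x) ∧
      Filter.Tendsto ts Filter.atTop (nhds 0) ∧
      ∀ k, Φ (xs k) (ts k) ∈ S :=
  no_frequent_returns_general Φ S htr hx
end

section
/- Let (Φ,X) be a flow and S ⊂ X topologically transversal to Φ. Then for each x ∈ S and ε > 0 there exists an open neighborhood V of x in X such that Φ(y,[−ε,ε]) ∩ S ≠ ∅ for every y ∈ V. -/
open Set Function Topology

/-!
In the chart at `x ∈ S`, the section `S` is the hyperplane `v_last = 0` of a ball, and each open
half-ball is convex, hence lies in one component of `U \ S`. Since `Φ(x, a)` and `Φ(x, b)`, for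
`a < 0 < b` small, lie in different components, their heights `v_last` have opposite signs. By
continuity of the flow and compactness of `[a, b]`, the orbit of every `y` near `x` stays in the
chart for times in `[a, b]` and its heights at `a` and `b` still have opposite signs, so by the
intermediate value theorem it meets `S` at some time in `[a, b]`.
-/

theorem exists_mem_Icc_eq_zero_of_mul_nonpos {f : ℝ → ℝ} {a b : ℝ} (hab : a ≤ b)
    (hf : ContinuousOn f (Icc a b)) (hfab : f a * f b ≤ 0) : ∃ t ∈ Icc a b, f t = 0 := by
  have h0 : (0 : ℝ) ∈ uIcc (f a) (f b) := by
    rcases mul_nonpos_iff.1 hfab with ⟨ha, hb⟩ | ⟨ha, hb⟩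
    · exact mem_uIcc.2 (Or.inr ⟨hb, ha⟩)
    · exact mem_uIcc.2 (Or.inl ⟨ha, hb⟩)
  rw [← uIcc_of_le hab] at hf ⊢
  exact intermediate_value_uIcc hf h0

theorem connectedComponentIn_eq_of_mapsTo_Icc {X : Type*} [TopologicalSpace X] {W : Set X}
    {γ : ℝ → X} {s t : ℝ} (hγ : ContinuousOn γ (Icc s t)) (hst : s ≤ t)
    (hW : MapsTo γ (Icc s t) W) :
    connectedComponentIn W (γ s) = connectedComponentIn W (γ t) :=
  connectedComponentIn_eq <| (isPreconnected_Icc.image γ hγ).subset_connectedComponentIn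
    (mem_image_of_mem γ (left_mem_Icc.2 hst)) hW.image_subset
    (mem_image_of_mem γ (right_mem_Icc.2 hst))

theorem connectedComponentIn_ne_of_mapsTo_Icc {X : Type*} [TopologicalSpace X] {W : Set X}
    {γ : ℝ → X} (hγ : Continuous γ) {s a b t : ℝ} (hsa : s ≤ a) (hbt : b ≤ t)
    (hsaW : MapsTo γ (Icc s a) W) (hbtW : MapsTo γ (Icc b t) W)
    (hst : connectedComponentIn W (γ s) ≠ connectedComponentIn W (γ t)) :
    connectedComponentIn W (γ a) ≠ connectedComponentIn W (γ b) := by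
  rwa [← connectedComponentIn_eq_of_mapsTo_Icc hγ.continuousOn hsa hsaW,
    connectedComponentIn_eq_of_mapsTo_Icc hγ.continuousOn hbt hbtW]

theorem exists_continuousOn_restrict_eq {X Y : Type*} [TopologicalSpace X] [TopologicalSpace Y]
    [Nonempty Y] {U : Set X} {g : U → Y} (hg : Continuous g) :
    ∃ f : X → Y, ContinuousOn f U ∧ ∀ y : U, f y = g y := by
  refine ⟨extend Subtype.val g fun _ => Classical.ofNonempty, ?_,
    fun y => Subtype.val_injective.extend_apply _ _ y⟩
  rw [continuousOn_iff_continuous_domRestrict]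
  convert hg using 1
  funext y
  exact Subtype.val_injective.extend_apply _ _ y

theorem Convex.isPreconnected_setOf_pos {E : Type*} [AddCommGroup E] [Module ℝ E]
    [TopologicalSpace E] [ContinuousAdd E] [ContinuousSMul ℝ E] {B : Set E} (hB : Convex ℝ B)
    (ℓ : E →ₗ[ℝ] ℝ) : IsPreconnected {v : B | 0 < ℓ v} := by
  rw [← IsInducing.subtypeVal.isPreconnected_image]
  change IsPreconnected (Subtype.val '' (Subtype.val ⁻¹' {w | 0 < ℓ w} : Set B))
  rw [Subtype.image_preimage_coe]
  exact (hB.inter (convex_halfSpace_gt ℓ.isLinear 0)).isPreconnected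

theorem mul_neg_of_connectedComponentIn_ne {X E : Type*} [TopologicalSpace X] [AddCommGroup E]
    [Module ℝ E] [TopologicalSpace E] [ContinuousAdd E] [ContinuousSMul ℝ E]
    {U S : Set X} {B : Set E} (hB : Convex ℝ B) (φ : U ≃ₜ B) (ℓ : E →ₗ[ℝ] ℝ) {f : X → ℝ}
    (hfφ : ∀ y : U, f y = ℓ (φ y)) (hS : ∀ y ∈ U, y ∈ S ↔ f y = 0) {p q : X}
    (hp : p ∈ U \ S) (hq : q ∈ U \ S)
    (hpq : connectedComponentIn (U \ S) p ≠ connectedComponentIn (U \ S) q) :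
    f p * f q < 0 := by
  by_contra! hpos
  have hp0 : f p ≠ 0 := fun h => hp.2 ((hS p hp.1).2 h)
  have hq0 : f q ≠ 0 := fun h => hq.2 ((hS q hq.1).2 h)
  -- Multiplying `ℓ` by `f p` makes both `p` and `q` lie on its positive side.
  set T : Set X := (Subtype.val ∘ φ.symm) '' {v : B | 0 < (f p • ℓ) v}
  have hT : IsPreconnected T := (hB.isPreconnected_setOf_pos _).image _
    (continuous_subtype_val.comp φ.symm.continuous).continuousOn
  have hTS : T ⊆ U \ S := by
    rintro _ ⟨v, hv, rfl⟩
    refine ⟨(φ.symm v).2, fun hvS => ?_⟩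
    have h0 := (hS _ (φ.symm v).2).1 hvS
    rw [hfφ, φ.apply_symm_apply] at h0
    simp [h0] at hv
  have hmem : ∀ y (hy : y ∈ U), 0 < f p * f y → y ∈ T := fun y hy hpy =>
    ⟨φ ⟨y, hy⟩, by simpa [← hfφ] using hpy, by simp⟩
  exact hpq <| connectedComponentIn_eq <| hT.subset_connectedComponentIn
    (hmem p hp.1 (mul_self_pos.2 hp0)) hTS
    (hmem q hq.1 (lt_of_le_of_ne hpos (mul_ne_zero hp0 hq0).symm))

theorem eventually_exists_mem_Icc_mem_of_mul_neg {X : Type*} [TopologicalSpace X]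
    {Φ : X → ℝ → X} (hΦ : Continuous (uncurry Φ)) {U S : Set X} {f : X → ℝ} (hU : IsOpen U)
    (hf : ContinuousOn f U) (hfS : ∀ y ∈ U, f y = 0 → y ∈ S) {x : X} {a b : ℝ} (hab : a ≤ b)
    (hmaps : MapsTo (Φ x) (Icc a b) U) (hsign : f (Φ x a) * f (Φ x b) < 0) :
    ∀ᶠ y in 𝓝 x, ∃ t ∈ Icc a b, Φ y t ∈ S := by
  have hmaps' : ∀ᶠ y in 𝓝 x, MapsTo (Φ y) (Icc a b) U :=
    isCompact_Icc.eventually_forall_of_forall_eventually fun t ht =>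
      hΦ.continuousAt.eventually_mem (hU.mem_nhds (hmaps ht))
  have hfat : ∀ t ∈ Icc a b, ContinuousAt (fun y => f (Φ y t)) x := fun t ht =>
    (hf.continuousAt (hU.mem_nhds (hmaps ht))).comp (f := fun y => Φ y t)
      (hΦ.uncurry_right t).continuousAt
  have hsign' : ∀ᶠ y in 𝓝 x, f (Φ y a) * f (Φ y b) < 0 :=
    ((hfat a (left_mem_Icc.2 hab)).mul (hfat b (right_mem_Icc.2 hab))).eventually
      (eventually_lt_nhds hsign)
  filter_upwards [hmaps', hsign'] with y hyU hy
  obtain ⟨t, ht, h0⟩ := exists_mem_Icc_eq_zero_of_mul_nonpos hab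
    (hf.comp (hΦ.uncurry_left y).continuousOn hyU) hy.le
  exact ⟨t, ht, hfS _ (hyU ht) h0⟩

theorem exists_nhd_hitting_section_general {X : Type*} [TopologicalSpace X]
    {n : ℕ} (Φ : X → ℝ → X) (S : Set X)
    (law : FlowLaw Φ) (htr : IsTransversal n Φ S) {x : X} (hx : x ∈ S)
    {ε : ℝ} (hε : 0 < ε) :
    ∃ V : Set X, IsOpen V ∧ x ∈ V ∧ ∀ y ∈ V, ∃ t ∈ Set.Icc (-ε) ε, Φ y t ∈ S := by
  obtain ⟨δp, δm, hδ, hchart⟩ := htr.trans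
  obtain ⟨hδp, hδm⟩ := hδ x hx
  obtain ⟨U, hUo, hxU, ⟨φ, hφ⟩, horb, hcc, -⟩ := hchart x hx
  set ℓ := EuclideanSpace.proj (𝕜 := ℝ) (Fin.last n)
  obtain ⟨f, hf, hfφ⟩ := exists_continuousOn_restrict_eq
    (ℓ.continuous.comp (continuous_subtype_val.comp φ.continuous))
  have hS : ∀ y ∈ U, y ∈ S ↔ f y = 0 := fun y hy => by rw [hfφ ⟨y, hy⟩]; exact hφ ⟨y, hy⟩
  set a := max (δm x) (-ε)
  set b := min (δp x) ε
  have ha : a < 0 := max_lt hδm (neg_neg_iff_pos.2 hε)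
  have hb : 0 < b := lt_min hδp hε
  have hsign : f (Φ x a) * f (Φ x b) < 0 :=
    mul_neg_of_connectedComponentIn_ne (convex_ball 0 1) φ ℓ.toLinearMap hfφ hS
      (horb a ⟨le_max_left .., ha.le.trans hδp.le⟩ ha.ne)
      (horb b ⟨hδm.le.trans hb.le, min_le_left ..⟩ hb.ne') <|
      connectedComponentIn_ne_of_mapsTo_Icc (law.cont.uncurry_left x) (le_max_left ..)
        (min_le_left ..)
        (fun t ht => horb t ⟨ht.1, ht.2.trans (ha.le.trans hδp.le)⟩ (ht.2.trans_lt ha).ne)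
        (fun t ht => horb t ⟨hδm.le.trans (hb.le.trans ht.1), ht.2⟩ (hb.trans_le ht.1).ne') hcc
  have hmaps : MapsTo (Φ x) (Icc a b) U := fun t ht => by
    rcases eq_or_ne t 0 with rfl | ht0
    · rwa [law.map_zero]
    · exact (horb t ⟨(le_max_left ..).trans ht.1, ht.2.trans (min_le_left ..)⟩ ht0).1
  obtain ⟨V, hV, hVo, hxV⟩ := eventually_nhds_iff.1 <|
    eventually_exists_mem_Icc_mem_of_mul_neg law.cont hUo hf (fun y hy => (hS y hy).2)
      (ha.trans hb).le hmaps hsign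
  exact ⟨V, hVo, hxV, fun y hy => (hV y hy).imp fun t ht =>
    ⟨Icc_subset_Icc (le_max_right ..) (min_le_right ..) ht.1, ht.2⟩⟩

/-- if `S` is topologically transversal to `Φ`, then for every `x ∈ S` and
`ε > 0` there is an open neighborhood `V` of `x` such that `Φ(y,[−ε,ε]) ∩ S ≠ ∅` for all
`y ∈ V`. -/
theorem exists_nhd_hitting_section {X : Type*} [TopologicalSpace X] [T2Space X]
    [SecondCountableTopology X] {n : ℕ} (Φ : X → ℝ → X) (S : Set X)
    (law : FlowLaw Φ) (htr : IsTransversal n Φ S) {x : X} (hx : x ∈ S)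
    {ε : ℝ} (hε : 0 < ε) :
    ∃ V : Set X, IsOpen V ∧ x ∈ V ∧ ∀ y ∈ V, ∃ t ∈ Set.Icc (-ε) ε, Φ y t ∈ S :=
  exists_nhd_hitting_section_general Φ S law htr hx hε
end

section
/- Let (Φ,X) be a flow with global Poincaré section S. Then for every x ∈ S, the series ∑_{n=0}^∞ T_Φ((PΦ)ⁿ(x)) and ∑_{n=1}^∞ T_Φ((PΦ)^{−n}(x)) both diverge to infinity, where PΦ is the first return map and T_Φ the first return time. -/
open Set Function Topology

/-- A global Poincaré section: a topologically transversal submanifold met by every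
orbit in forward and in backward time. -/
structure IsGlobalSection {X : Type*} [TopologicalSpace X] (n : ℕ)
    (Φ : X → ℝ → X) (S : Set X) : Prop where
  transversal : IsTransversal n Φ S
  forward : ∀ x : X, ∃ t > 0, Φ x t ∈ S
  backward : ∀ x : X, ∃ t < 0, Φ x t ∈ S

/-- `T` is the first return time of the flow `Φ` to the section `S`: it is positive,
attained, and no earlier positive time returns to `S`. -/
def IsFirstReturn {X : Type*} (Φ : X → ℝ → X) (S : Set X) (T : X → ℝ) : Prop :=
  ∀ x ∈ S, 0 < T x ∧ Φ x (T x) ∈ S ∧ ∀ t ∈ Set.Ioo 0 (T x), Φ x t ∉ S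

/-!
Both partial sums are the flow times at which the orbit of `x` meets `S` along the iterates of
the return map (or of its inverse). Were such a sum bounded by `l`, all these return points would
lie in the compact set `Φ(x, [-l, l]) ∩ S`. Transversality bounds the return time from below
near each point of `S`, hence uniformly on compact subsets of `S`, so the sum would still grow
at least linearly: a contradiction.
-/

namespace IsTransversal

variable {X : Type*} [TopologicalSpace X] {n : ℕ} {Φ : X → ℝ → X} {S : Set X} {T : X → ℝ}

theorem exists_mem_nhds_pos_lt_firstReturn (hS : IsTransversal n Φ S)
    (hT : IsFirstReturn Φ S T) {y₀ : X} (hy₀ : y₀ ∈ S) :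
    ∃ V ∈ 𝓝 y₀, ∃ δ > 0, ∀ y ∈ V ∩ S, δ < T y := by
  obtain ⟨δp, δm, hsign, hchart⟩ := hS.trans
  -- the orbit of `y` does not meet `S` at times in `(0, δp y]`
  have hδp_lt : ∀ y ∈ S, δp y < T y := by
    intro y hy
    by_contra! hle
    obtain ⟨U, -, -, -, havoid, -⟩ := hchart y hy
    obtain ⟨hTpos, hret, -⟩ := hT y hy
    exact (havoid (T y) ⟨((hsign y hy).2.trans hTpos).le, hle⟩ hTpos.ne').2 hret
  obtain ⟨U, -, -, -, -, -, V, -, hVo, hy₀V, δ, hδ, hVδ⟩ := hchart y₀ hy₀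
  exact ⟨V, hVo.mem_nhds hy₀V, δ, hδ, fun y hy => (hVδ y hy).1.trans (hδp_lt y hy.2)⟩

theorem exists_pos_lt_firstReturn_of_isCompact (hS : IsTransversal n Φ S)
    (hT : IsFirstReturn Φ S T) {K : Set X} (hK : IsCompact K) (hKS : K ⊆ S) :
    ∃ δ > 0, ∀ y ∈ K, δ < T y := by
  obtain ⟨δ, hδ, hlt⟩ : ∃ δ > 0, ∀ y ∈ K ∩ S, δ < T y := by
    refine hK.induction_on ⟨1, one_pos, by simp⟩
      (fun s t hst ⟨δ, hδ, h⟩ => ⟨δ, hδ, fun y hy => h y ⟨hst hy.1, hy.2⟩⟩)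
      (fun s t ⟨δ, hδ, h⟩ ⟨δ', hδ', h'⟩ => ⟨min δ δ', lt_min hδ hδ', ?_⟩) fun y hy => ?_
    · rintro y ⟨hs | ht, hyS⟩
      · exact (min_le_left _ _).trans_lt (h y ⟨hs, hyS⟩)
      · exact (min_le_right _ _).trans_lt (h' y ⟨ht, hyS⟩)
    · obtain ⟨V, hV, hVδ⟩ := hS.exists_mem_nhds_pos_lt_firstReturn hT (hKS hy)
      exact ⟨V, mem_nhdsWithin_of_mem_nhds hV, hVδ⟩
  exact ⟨δ, hδ, fun y hy => hlt y ⟨hy, hKS hy⟩⟩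

theorem tendsto_sum_firstReturn_of_mem_compact (hS : IsTransversal n Φ S)
    (hT : IsFirstReturn Φ S T) {K : Set X} (hK : IsCompact K) (hKS : K ⊆ S)
    {y : ℕ → X} (hy : ∀ k, y k ∈ K) :
    Filter.Tendsto (fun N => ∑ k ∈ Finset.range N, T (y k)) Filter.atTop Filter.atTop := by
  obtain ⟨δ, hδ, hlt⟩ := hS.exists_pos_lt_firstReturn_of_isCompact hT hK hKS
  refine Filter.tendsto_atTop_mono (fun N => ?_)
    (tendsto_natCast_atTop_atTop.atTop_mul_const hδ)
  calc (N : ℝ) * δ = ∑ _k ∈ Finset.range N, δ := by simp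
    _ ≤ ∑ k ∈ Finset.range N, T (y k) :=
      Finset.sum_le_sum fun k _ => (hlt _ (hy k)).le

theorem tendsto_sum_firstReturn_of_mem_orbit (hS : IsTransversal n Φ S)
    (hT : IsFirstReturn Φ S T) {x : X} {y : ℕ → X} (hyS : ∀ k, y k ∈ S) {t : ℕ → ℝ}
    (hyt : ∀ k, Φ x (t k) = y k)
    (ht : ∀ k, |t k| ≤ ∑ i ∈ Finset.range (k + 1), T (y i)) :
    Filter.Tendsto (fun N => ∑ k ∈ Finset.range N, T (y k)) Filter.atTop Filter.atTop := by
  have hmono : Monotone fun N => ∑ k ∈ Finset.range N, T (y k) :=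
    monotone_nat_of_le_succ fun N => by
      simpa [Finset.sum_range_succ] using (hT _ (hyS N)).1.le
  by_cases hbdd : BddAbove (range fun N => ∑ k ∈ Finset.range N, T (y k))
  · obtain ⟨l, hl⟩ := hbdd
    refine hS.tendsto_sum_firstReturn_of_mem_compact hT (hS.compact_inter x (-l) l)
      inter_subset_right fun k => ⟨⟨t k, abs_le.1 ((ht k).trans (hl ⟨k + 1, rfl⟩)), hyt k⟩, hyS k⟩
  · exact Filter.tendsto_atTop_atTop_of_monotone' hmono hbdd

end IsTransversal

namespace FlowLaw

variable {X : Type*} [TopologicalSpace X] {Φ : X → ℝ → X} {S : Set X}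

theorem iterate_eq_flow_sum (law : FlowLaw Φ) {f : X → X} {τ : X → ℝ} (hfS : MapsTo f S S)
    (hf : ∀ y ∈ S, f y = Φ y (τ y)) {x : X} (hx : x ∈ S) (N : ℕ) :
    f^[N] x = Φ x (∑ k ∈ Finset.range N, τ (f^[k] x)) := by
  induction N with
  | zero => simp [law.map_zero]
  | succ N ih =>
    rw [iterate_succ_apply', hf _ (hfS.iterate N hx), Finset.sum_range_succ, ← law.map_add,
      ← ih]

theorem eq_flow_neg_of_eq_flow (law : FlowLaw Φ) {y z : X} {t : ℝ} (h : Φ z t = y) :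
    z = Φ y (-t) := by
  rw [← h, law.map_add, add_neg_cancel, law.map_zero]

end FlowLaw

theorem return_time_series_diverges_general {X : Type*} [TopologicalSpace X]
    {n : ℕ} (Φ : X → ℝ → X) (S : Set X)
    (law : FlowLaw Φ) (hgs : IsGlobalSection n Φ S)
    (T : X → ℝ) (hT : IsFirstReturn Φ S T)
    (P Q : X → X) (hP : ∀ x, P x = Φ x (T x))
    (hQS : Set.MapsTo Q S S)
    (hPQ : ∀ x ∈ S, P (Q x) = x)
    {x : X} (hx : x ∈ S) :
    Filter.Tendsto (fun N => ∑ k ∈ Finset.range N, T (P^[k] x)) Filter.atTop Filter.atTop ∧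
    Filter.Tendsto (fun N => ∑ k ∈ Finset.range N, T (Q^[k+1] x)) Filter.atTop Filter.atTop := by
  have hPS : MapsTo P S S := fun y hy => (hP y).symm ▸ (hT y hy).2.1
  have hQ : ∀ y ∈ S, Q y = Φ y (-T (Q y)) := fun y hy =>
    law.eq_flow_neg_of_eq_flow ((hP _).symm.trans (hPQ y hy))
  have hT_nonneg : ∀ y ∈ S, 0 ≤ T y := fun y hy => (hT y hy).1.le
  constructor
  · refine hgs.transversal.tendsto_sum_firstReturn_of_mem_orbit hT (hPS.iterate · hx)
      (fun k => (law.iterate_eq_flow_sum hPS (fun y _ => hP y) hx k).symm) fun k => ?_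
    rw [abs_of_nonneg (Finset.sum_nonneg fun i _ => hT_nonneg _ (hPS.iterate i hx)),
      Finset.sum_range_succ]
    exact le_add_of_nonneg_right (hT_nonneg _ (hPS.iterate k hx))
  · refine hgs.transversal.tendsto_sum_firstReturn_of_mem_orbit (x := x) hT
      (fun k => hQS.iterate (k + 1) hx)
      (t := fun k => -∑ i ∈ Finset.range (k + 1), T (Q^[i + 1] x)) (fun k => ?_) fun k => ?_
    · rw [law.iterate_eq_flow_sum hQS hQ hx (k + 1)]
      simp only [iterate_succ_apply', Finset.sum_neg_distrib]
    · rw [abs_neg, abs_of_nonneg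
        (Finset.sum_nonneg fun i _ => hT_nonneg _ (hQS.iterate (i + 1) hx))]

/-- for a flow with global Poincaré section, the series
`∑_{n≥0} T_Φ((PΦ)ⁿ x)` and `∑_{n≥1} T_Φ((PΦ)^{−n} x)` diverge to infinity for every
`x ∈ S`.  Here `P = PΦ` is the first return map and `Q` its inverse on `S`. -/
theorem return_time_series_diverges {X : Type*} [TopologicalSpace X] [T2Space X]
    [SecondCountableTopology X] {n : ℕ} (Φ : X → ℝ → X) (S : Set X)
    (law : FlowLaw Φ) (hgs : IsGlobalSection n Φ S)
    (T : X → ℝ) (hT : IsFirstReturn Φ S T)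
    (P Q : X → X) (hP : ∀ x, P x = Φ x (T x))
    (hQS : Set.MapsTo Q S S)
    (hQP : ∀ x ∈ S, Q (P x) = x) (hPQ : ∀ x ∈ S, P (Q x) = x)
    {x : X} (hx : x ∈ S) :
    Filter.Tendsto (fun N => ∑ k ∈ Finset.range N, T (P^[k] x)) Filter.atTop Filter.atTop ∧
    Filter.Tendsto (fun N => ∑ k ∈ Finset.range N, T (Q^[k+1] x)) Filter.atTop Filter.atTop :=
  return_time_series_diverges_general Φ S law hgs T hT P Q hP hQS hPQ hx
end

section
/- Let (Φ,X) and (Ψ,Y) be flows with global Poincaré sections S and S′ respectively, and (h,τ) : (Φ,X) → (Ψ,Y) a weak morphism. (1) If h(S) ⊆ S′, then T_Ψ(h(x)) ≤ τ(x, T_Φ(x)) for all x ∈ S. (2) If h⁻¹(S′) ⊆ S, then τ(x, T_Φ(x)) ≤ T_Ψ(h(x)) for all x ∈ h⁻¹(S′). In particular, if S = h⁻¹(S′), then T_Ψ(h(x)) = τ(x, T_Φ(x)) for all x ∈ S. -/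
open Set Function Topology

/-- A weak morphism of flows: a continuous map `h` together with time
reparametrizations `τ x : ℝ → ℝ`, each an increasing homeomorphism fixing `0`. -/
structure IsWeakMorphism {X Y : Type*} [TopologicalSpace X] [TopologicalSpace Y]
    (Φ : X → ℝ → X) (Ψ : Y → ℝ → Y) (h : X → Y) (τ : X → ℝ → ℝ) : Prop where
  cont : Continuous h
  equivariant : ∀ x t, h (Φ x t) = Ψ (h x) (τ x t)
  time_cont : ∀ x, Continuous (τ x)
  mono : ∀ x, StrictMono (τ x)
  surj : ∀ x, Function.Surjective (τ x)
  time_zero : ∀ x, τ x 0 = 0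

/-! Both inequalities come from transporting a return along the orbit through `h`: a return of
`x` to `S` at time `t > 0` is a return of `h x` to `S'` at time `τ x t > 0` when `h(S) ⊆ S′`, and
conversely a return of `h x` at time `τ x t` pulls back to a return of `x` at time `t` when
`h⁻¹(S′) ⊆ S`; minimality of the first return times then gives the two bounds. -/

theorem IsFirstReturn.le_of_mem {X : Type*} {Φ : X → ℝ → X} {S : Set X} {T : X → ℝ}
    (hT : IsFirstReturn Φ S T) {x : X} (hx : x ∈ S) {t : ℝ} (ht : 0 < t) (hxt : Φ x t ∈ S) :
    T x ≤ t :=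
  not_lt.mp fun hlt => (hT x hx).2.2 t ⟨ht, hlt⟩ hxt

namespace IsWeakMorphism

variable {X Y : Type*} [TopologicalSpace X] [TopologicalSpace Y]
  {Φ : X → ℝ → X} {Ψ : Y → ℝ → Y} {h : X → Y} {τ : X → ℝ → ℝ}

theorem time_pos_iff (hw : IsWeakMorphism Φ Ψ h τ) (x : X) {t : ℝ} : 0 < τ x t ↔ 0 < t := by
  conv_lhs => rw [← hw.time_zero x]
  exact (hw.mono x).lt_iff_lt

theorem returnTime_le_of_mapsTo (hw : IsWeakMorphism Φ Ψ h τ) {S : Set X} {S' : Set Y}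
    {TΦ : X → ℝ} {TΨ : Y → ℝ} (hTΦ : IsFirstReturn Φ S TΦ) (hTΨ : IsFirstReturn Ψ S' TΨ)
    (hmaps : MapsTo h S S') {x : X} (hx : x ∈ S) : TΨ (h x) ≤ τ x (TΦ x) := by
  obtain ⟨hpos, hret, -⟩ := hTΦ x hx
  have hret' : Ψ (h x) (τ x (TΦ x)) ∈ S' := hw.equivariant x (TΦ x) ▸ hmaps hret
  exact hTΨ.le_of_mem (hmaps hx) ((hw.time_pos_iff x).mpr hpos) hret'

theorem le_returnTime_of_preimage_subset (hw : IsWeakMorphism Φ Ψ h τ) {S : Set X}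
    {S' : Set Y} {TΦ : X → ℝ} {TΨ : Y → ℝ} (hTΦ : IsFirstReturn Φ S TΦ)
    (hTΨ : IsFirstReturn Ψ S' TΨ) (hsub : h ⁻¹' S' ⊆ S) {x : X} (hx : x ∈ h ⁻¹' S') :
    τ x (TΦ x) ≤ TΨ (h x) := by
  obtain ⟨hpos, hret, -⟩ := hTΨ (h x) hx
  obtain ⟨t, ht⟩ := hw.surj x (TΨ (h x))
  have hret' : Φ x t ∈ S := hsub (show h (Φ x t) ∈ S' by rwa [hw.equivariant, ht])
  have htpos : 0 < t := (hw.time_pos_iff x).mp (ht ▸ hpos)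
  exact ht ▸ (hw.mono x).monotone (hTΦ.le_of_mem (hsub hx) htpos hret')

end IsWeakMorphism

theorem return_time_weak_morphism_general {X Y : Type*} [TopologicalSpace X] [TopologicalSpace Y]
    (Φ : X → ℝ → X) (S : Set X) (Ψ : Y → ℝ → Y) (S' : Set Y)
    (TΦ : X → ℝ) (TΨ : Y → ℝ) (hTΦ : IsFirstReturn Φ S TΦ) (hTΨ : IsFirstReturn Ψ S' TΨ)
    (h : X → Y) (τ : X → ℝ → ℝ) (hw : IsWeakMorphism Φ Ψ h τ) :
    ((Set.MapsTo h S S') → ∀ x ∈ S, TΨ (h x) ≤ τ x (TΦ x)) ∧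
    ((h ⁻¹' S' ⊆ S) → ∀ x ∈ h ⁻¹' S', τ x (TΦ x) ≤ TΨ (h x)) ∧
    ((S = h ⁻¹' S') → ∀ x ∈ S, TΨ (h x) = τ x (TΦ x)) := by
  refine ⟨fun hmaps _ hx => hw.returnTime_le_of_mapsTo hTΦ hTΨ hmaps hx,
    fun hsub _ hx => hw.le_returnTime_of_preimage_subset hTΦ hTΨ hsub hx, ?_⟩
  rintro rfl x hx
  exact le_antisymm (hw.returnTime_le_of_mapsTo hTΦ hTΨ (mapsTo_preimage h S') hx)
    (hw.le_returnTime_of_preimage_subset hTΦ hTΨ subset_rfl hx)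

/-- comparison of first return times under a weak morphism `(h,τ)`.
(1) If `h(S) ⊆ S′` then `T_Ψ(h x) ≤ τ(x, T_Φ x)` on `S`.
(2) If `h⁻¹(S′) ⊆ S` then `τ(x, T_Φ x) ≤ T_Ψ(h x)` on `h⁻¹(S′)`.
In particular if `S = h⁻¹(S′)` then `T_Ψ(h x) = τ(x, T_Φ x)` on `S`. -/
theorem return_time_weak_morphism {X Y : Type*} [TopologicalSpace X] [T2Space X]
    [SecondCountableTopology X] [TopologicalSpace Y] [T2Space Y]
    [SecondCountableTopology Y] {n m : ℕ}
    (Φ : X → ℝ → X) (S : Set X) (Ψ : Y → ℝ → Y) (S' : Set Y)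
    (lawΦ : FlowLaw Φ) (lawΨ : FlowLaw Ψ)
    (hgs : IsGlobalSection n Φ S) (hgs' : IsGlobalSection m Ψ S')
    (TΦ : X → ℝ) (TΨ : Y → ℝ) (hTΦ : IsFirstReturn Φ S TΦ) (hTΨ : IsFirstReturn Ψ S' TΨ)
    (h : X → Y) (τ : X → ℝ → ℝ) (hw : IsWeakMorphism Φ Ψ h τ) :
    ((Set.MapsTo h S S') → ∀ x ∈ S, TΨ (h x) ≤ τ x (TΦ x)) ∧
    ((h ⁻¹' S' ⊆ S) → ∀ x ∈ h ⁻¹' S', τ x (TΦ x) ≤ TΨ (h x)) ∧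
    ((S = h ⁻¹' S') → ∀ x ∈ S, TΨ (h x) = τ x (TΦ x)) :=
  return_time_weak_morphism_general Φ S Ψ S' TΦ TΨ hTΦ hTΨ h τ hw
end

section
/- Let (Φ,X) be a flow with global Poincaré section S, with return time T_Φ and return map PΦ. The map k : S_{PΦ} → X defined on the mapping torus of PΦ by k([x,t]) := Φ(x, t·T_Φ(x)) (for x ∈ S, 0 ≤ t < 1) is well-defined and bijective. -/
open Set Function Topology

/-- The relation generating the mapping torus identification `(x, t) ∼ (f x, t − 1)`
(so in particular `(x,1) ∼ (f x, 0)`). -/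
def MTRel {X : Type*} [TopologicalSpace X] (f : X ≃ₜ X) : X × ℝ → X × ℝ → Prop :=
  fun p q => q.1 = f p.1 ∧ q.2 = p.2 - 1

/-- The mapping torus `X_f` of a homeomorphism `f : X → X`, with the quotient
topology.  Every point has a unique representative `[x,t]` with `0 ≤ t < 1`. -/
abbrev MappingTorus {X : Type*} [TopologicalSpace X] (f : X ≃ₜ X) : Type _ :=
  Quot (MTRel f)

/-- The class `[x,t]` of `(x,t)` in the mapping torus. -/
def mtk {X : Type*} [TopologicalSpace X] (f : X ≃ₜ X) (x : X) (t : ℝ) :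
    MappingTorus f := Quot.mk _ (x, t)

/-- The suspension flow `Σf` on the mapping torus; on classes it satisfies
`Σf([x,t],s) = [fⁿ x, s+t−n]` for the unique integer `n` with `s+t−1 < n ≤ s+t`. -/
def susp {X : Type*} [TopologicalSpace X] (f : X ≃ₜ X) (p : MappingTorus f) (s : ℝ) :
    MappingTorus f :=
  Quot.lift (fun q : X × ℝ => Quot.mk (MTRel f) (q.1, q.2 + s))
    (fun a b hab => Quot.sound ⟨hab.1, by rw [hab.2]; ring⟩) p

/-- The zero section `(X_f)₀ = {[x,0] : x ∈ X}` of the mapping torus. -/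
def zeroSection {X : Type*} [TopologicalSpace X] (f : X ≃ₜ X) : Set (MappingTorus f) :=
  {p | ∃ x : X, p = mtk f x 0}


/-- The piecewise constant function `R_Φ(x)(u) = T_Φ((PΦ)^i x)` for `u ∈ [i, i+1)`,
where the return map (a homeomorphism of the section) is given as `Pr`. -/
noncomputable def Rfun {X : Type*} [TopologicalSpace X] (T : X → ℝ) {S : Set X}
    (Pr : ↥S ≃ₜ ↥S) (x : ↥S) (u : ℝ) : ℝ :=
  T ((Pr.toEquiv ^ ⌊u⌋) x : ↥S)

/-- The time part `τ([x,t],s) = ∫₀^{s+t} R_Φ(x)(u) du − t·T_Φ(x)` of the natural weak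
morphism from the suspension of the Poincaré map to the original flow. -/
noncomputable def tauTime {X : Type*} [TopologicalSpace X] (T : X → ℝ) {S : Set X}
    (Pr : ↥S ≃ₜ ↥S) (x : ↥S) (t s : ℝ) : ℝ :=
  (∫ u in (0:ℝ)..(s + t), Rfun T Pr x u) - t * T (x : X)

/-! The flow lines starting on `S` cover `X` because the successive return times of a point of
`S` are unbounded: otherwise they would converge, the return points would accumulate at a point
of `S` (the orbit segment through them meets `S` in a compact set), and near that point
transversality bounds the return time from below, contradicting that consecutive return times
get arbitrarily close. The covering is disjoint up to time `T` because no orbit returns to `S`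
before its first return time. Since every point of the mapping torus has a unique representative
`[x, t]` with `0 ≤ t < 1`, this makes `k` bijective. -/

open Filter

namespace MappingTorus

variable {Y Z : Type*} [TopologicalSpace Y] (f : Y ≃ₜ Y)

theorem mtk_apply_sub_one (x : Y) (t : ℝ) : mtk f (f x) (t - 1) = mtk f x t :=
  (Quot.sound ⟨rfl, rfl⟩).symm

theorem mtk_zpow_add_one_apply (m : ℤ) (x : Y) (t : ℝ) :
    mtk f ((f.toEquiv ^ (m + 1)) x) (t - (m + 1 : ℤ)) = mtk f ((f.toEquiv ^ m) x) (t - m) := by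
  rw [add_comm, zpow_one_add, Equiv.Perm.mul_apply, Int.cast_add, Int.cast_one, add_comm,
    ← sub_sub]
  exact mtk_apply_sub_one f _ _

theorem mtk_zpow_apply_sub (m : ℤ) (x : Y) (t : ℝ) :
    mtk f ((f.toEquiv ^ m) x) (t - m) = mtk f x t := by
  induction m using Int.induction_on with
  | zero => simp
  | succ i ih => rw [mtk_zpow_add_one_apply, ih]
  | pred i ih => rw [← ih, ← mtk_zpow_add_one_apply, sub_add_cancel]

theorem mtk_floor_fract (x : Y) (t : ℝ) :
    mtk f ((f.toEquiv ^ ⌊t⌋) x) (Int.fract t) = mtk f x t :=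
  mtk_zpow_apply_sub f ⌊t⌋ x t

noncomputable def liftFract (g : Y → ℝ → Z) : MappingTorus f → Z :=
  Quot.lift (fun q => g ((f.toEquiv ^ ⌊q.2⌋) q.1) (Int.fract q.2)) <| by
    rintro ⟨x, t⟩ ⟨_, _⟩ ⟨rfl, rfl⟩
    simp [Int.fract_sub_one, zpow_sub_one]

theorem liftFract_mtk (g : Y → ℝ → Z) (x : Y) {t : ℝ} (ht : t ∈ Ico 0 1) :
    liftFract f g (mtk f x t) = g x t := by
  simp [liftFract, mtk, Int.floor_eq_zero_iff.2 ht, Int.fract_eq_self.2 ht]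

theorem liftFract_injective {g : Y → ℝ → Z}
    (hg : ∀ x y, ∀ t ∈ Ico (0 : ℝ) 1, ∀ s ∈ Ico (0 : ℝ) 1, g x t = g y s → x = y ∧ t = s) :
    Injective (liftFract f g) := by
  rintro ⟨x, t⟩ ⟨y, s⟩ h
  obtain ⟨hxy, hts⟩ := hg _ _ _ ⟨Int.fract_nonneg t, Int.fract_lt_one t⟩
    _ ⟨Int.fract_nonneg s, Int.fract_lt_one s⟩ h
  change mtk f x t = mtk f y s
  rw [← mtk_floor_fract, ← mtk_floor_fract f y, hxy, hts]

theorem liftFract_surjective {g : Y → ℝ → Z} (hg : ∀ z, ∃ x, ∃ t ∈ Ico (0 : ℝ) 1, g x t = z) :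
    Surjective (liftFract f g) := by
  intro z
  obtain ⟨x, t, ht, rfl⟩ := hg z
  exact ⟨mtk f x t, liftFract_mtk f g x ht⟩

end MappingTorus

section Flow

variable {X : Type*} [TopologicalSpace X] {Φ : X → ℝ → X} {S : Set X} {T : X → ℝ}

theorem FlowLaw.continuous_orbit (law : FlowLaw Φ) (x : X) : Continuous (Φ x) :=
  law.cont.comp (continuous_const.prodMk continuous_id)

theorem FlowLaw.map_map_neg (law : FlowLaw Φ) (x : X) (t : ℝ) : Φ (Φ x t) (-t) = x := by
  rw [law.map_add, add_neg_cancel, law.map_zero]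

/-- `T(x) + T(P x) + ⋯ + T(P^{m-1} x)`, where `P x = Φ x (T x)` is the return map. -/
noncomputable def nthReturnTime (Φ : X → ℝ → X) (T : X → ℝ) (x : X) : ℕ → ℝ
  | 0 => 0
  | m + 1 => nthReturnTime Φ T x m + T (Φ x (nthReturnTime Φ T x m))

theorem IsFirstReturn.eq_of_map_eq (hT : IsFirstReturn Φ S T) (law : FlowLaw Φ) {x y : X}
    (hx : x ∈ S) (hy : y ∈ S) {a b : ℝ} (ha : a ∈ Ico 0 (T x)) (hb : b ∈ Ico 0 (T y))
    (h : Φ x a = Φ y b) : x = y ∧ a = b := by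
  wlog hab : a ≤ b generalizing x y a b
  · obtain ⟨hyx, hba⟩ := this hy hx hb ha h.symm (le_of_not_ge hab)
    exact ⟨hyx.symm, hba.symm⟩
  have hxy : Φ y (b - a) = x := by
    rw [sub_eq_add_neg, ← law.map_add, ← h, law.map_map_neg]
  rcases hab.eq_or_lt with rfl | hlt
  · rw [sub_self, law.map_zero] at hxy
    exact ⟨hxy.symm, rfl⟩
  · exact absurd (hxy ▸ hx) ((hT y hy).2.2 _ ⟨sub_pos.2 hlt, by linarith [ha.1, hb.2]⟩)

theorem IsFirstReturn.map_nthReturnTime_mem (hT : IsFirstReturn Φ S T) (law : FlowLaw Φ)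
    {x : X} (hx : x ∈ S) : ∀ m, Φ x (nthReturnTime Φ T x m) ∈ S
  | 0 => by simpa [nthReturnTime, law.map_zero] using hx
  | m + 1 => by
    rw [nthReturnTime, ← law.map_add]
    exact (hT _ (hT.map_nthReturnTime_mem law hx m)).2.1

theorem IsFirstReturn.nthReturnTime_strictMono (hT : IsFirstReturn Φ S T) (law : FlowLaw Φ)
    {x : X} (hx : x ∈ S) : StrictMono (nthReturnTime Φ T x) :=
  strictMono_nat_of_lt_succ fun m =>
    lt_add_of_pos_right _ (hT _ (hT.map_nthReturnTime_mem law hx m)).1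

theorem IsFirstReturn.exists_eq_map_of_mem_Ico_nthReturnTime (hT : IsFirstReturn Φ S T)
    (law : FlowLaw Φ) {x : X} (hx : x ∈ S) :
    ∀ m, ∀ τ ∈ Ico 0 (nthReturnTime Φ T x m), ∃ y ∈ S, ∃ τ' ∈ Ico 0 (T y), Φ y τ' = Φ x τ
  | 0, τ, hτ => by simp [nthReturnTime] at hτ
  | m + 1, τ, ⟨hτ0, hτ⟩ => by
    by_cases hτm : τ < nthReturnTime Φ T x m
    · exact hT.exists_eq_map_of_mem_Ico_nthReturnTime law hx m τ ⟨hτ0, hτm⟩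
    · rw [nthReturnTime] at hτ
      refine ⟨_, hT.map_nthReturnTime_mem law hx m, τ - nthReturnTime Φ T x m,
        ⟨by linarith, by linarith⟩, ?_⟩
      rw [law.map_add, add_sub_cancel]

theorem IsTransversal.exists_lt_firstReturn {n : ℕ} (hS : IsTransversal n Φ S)
    (hT : IsFirstReturn Φ S T) {p : X} (hp : p ∈ S) :
    ∃ δ > 0, ∀ᶠ y in 𝓝 p, y ∈ S → δ < T y := by
  obtain ⟨δp, δm, -, hloc⟩ := hS.trans
  obtain ⟨-, -, -, -, -, -, V, -, hV, hpV, δ, hδ, hVδ⟩ := hloc p hp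
  refine ⟨δ, hδ, mem_of_superset (hV.mem_nhds hpV) fun y hyV hy => ?_⟩
  by_contra! hTy
  obtain ⟨hTpos, hret, -⟩ := hT y hy
  obtain ⟨hδp, hδm⟩ := hVδ y ⟨hyV, hy⟩
  obtain ⟨_, -, -, -, hseg, -⟩ := hloc y hy
  exact (hseg (T y) ⟨by linarith, by linarith⟩ hTpos.ne').2 hret

theorem IsTransversal.exists_lt_nthReturnTime [T2Space X] {n : ℕ} (hS : IsTransversal n Φ S)
    (law : FlowLaw Φ) (hT : IsFirstReturn Φ S T) {x : X} (hx : x ∈ S) (s : ℝ) :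
    ∃ m, s < nthReturnTime Φ T x m := by
  by_contra! hbdd
  set σ := nthReturnTime Φ T x
  have hmono := (hT.nthReturnTime_strictMono law hx).monotone
  have hbdd' : BddAbove (range σ) := ⟨s, forall_mem_range.2 hbdd⟩
  set L := ⨆ m, σ m
  have hσ : Tendsto σ atTop (𝓝 L) := tendsto_atTop_ciSup hmono hbdd'
  have horbit : Tendsto (fun m => Φ x (σ m)) atTop (𝓝 (Φ x L)) :=
    ((law.continuous_orbit x).tendsto L).comp hσ
  have hL : Φ x L ∈ S := by
    have hmem : ∀ m, Φ x (σ m) ∈ Φ x '' Icc 0 L ∩ S := fun m =>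
      ⟨⟨σ m, ⟨hmono (Nat.zero_le m), le_ciSup hbdd' m⟩, rfl⟩, hT.map_nthReturnTime_mem law hx m⟩
    exact ((hS.compact_inter x 0 L).isClosed.mem_of_tendsto horbit (.of_forall hmem)).2
  obtain ⟨δ, hδ, hnear⟩ := hS.exists_lt_firstReturn hT hL
  have hgap : Tendsto (fun m => σ (m + 1) - σ m) atTop (𝓝 0) := by
    simpa using (hσ.comp (tendsto_add_atTop_nat 1)).sub hσ
  obtain ⟨m, hm, hmδ⟩ :=
    ((horbit.eventually hnear).and (hgap.eventually (gt_mem_nhds hδ))).exists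
  have := hm (hT.map_nthReturnTime_mem law hx m)
  simp only [σ, nthReturnTime, add_sub_cancel_left] at hmδ
  linarith

theorem IsGlobalSection.exists_eq_map [T2Space X] {n : ℕ} (hS : IsGlobalSection n Φ S)
    (law : FlowLaw Φ) (hT : IsFirstReturn Φ S T) (z : X) :
    ∃ y ∈ S, ∃ τ ∈ Ico 0 (T y), Φ y τ = z := by
  obtain ⟨t, ht, hzt⟩ := hS.backward z
  obtain ⟨m, hm⟩ := hS.transversal.exists_lt_nthReturnTime law hT hzt (-t)
  rw [← law.map_map_neg z t]
  exact hT.exists_eq_map_of_mem_Ico_nthReturnTime law hzt m (-t) ⟨by linarith, hm⟩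

end Flow

theorem torus_to_flow_bijective_general {X : Type*} [TopologicalSpace X] [T2Space X]
    {n : ℕ} (Φ : X → ℝ → X) (S : Set X)
    (law : FlowLaw Φ) (hgs : IsGlobalSection n Φ S)
    (T : X → ℝ) (hT : IsFirstReturn Φ S T)
    (Pr : ↥S ≃ₜ ↥S) :
    ∃ k : MappingTorus Pr → X,
      (∀ (x : ↥S) (t : ℝ), 0 ≤ t → t < 1 → k (mtk Pr x t) = Φ x (t * T x)) ∧
      Function.Bijective k := by
  refine ⟨MappingTorus.liftFract Pr fun x t => Φ x (t * T x),
    fun x t h0 h1 => MappingTorus.liftFract_mtk Pr _ x ⟨h0, h1⟩,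
    MappingTorus.liftFract_injective Pr ?_, MappingTorus.liftFract_surjective Pr ?_⟩
  · rintro x y t ⟨ht0, ht1⟩ s ⟨hs0, hs1⟩ h
    have hTx := (hT x x.2).1
    have hTy := (hT y y.2).1
    obtain ⟨hxy, hts⟩ := hT.eq_of_map_eq law x.2 y.2
      ⟨by positivity, by nlinarith⟩ ⟨by positivity, by nlinarith⟩ h
    obtain rfl := Subtype.ext hxy
    exact ⟨rfl, mul_right_cancel₀ hTx.ne' hts⟩
  · intro z
    obtain ⟨y, hy, τ, ⟨hτ0, hτT⟩, rfl⟩ := hgs.exists_eq_map law hT z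
    have hTy := (hT y hy).1
    exact ⟨⟨y, hy⟩, τ / T y, ⟨by positivity, (div_lt_one hTy).2 hτT⟩,
      by rw [div_mul_cancel₀ _ hTy.ne']⟩

/-- for a flow `Φ` with global Poincaré section `S`, return time `T` and
return map `Pr` (a homeomorphism of `S`), the map `k([x,t]) = Φ(x, t·T(x))` (for
`0 ≤ t < 1`) from the mapping torus of the return map to `X` is well defined and
bijective. -/
theorem torus_to_flow_bijective {X : Type*} [TopologicalSpace X] [T2Space X]
    [SecondCountableTopology X] {n : ℕ} (Φ : X → ℝ → X) (S : Set X)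
    (law : FlowLaw Φ) (hgs : IsGlobalSection n Φ S)
    (T : X → ℝ) (hT : IsFirstReturn Φ S T)
    (Pr : ↥S ≃ₜ ↥S) (hPr : ∀ x : ↥S, (Pr x : X) = Φ x (T x)) :
    ∃ k : MappingTorus Pr → X,
      (∀ (x : ↥S) (t : ℝ), 0 ≤ t → t < 1 → k (mtk Pr x t) = Φ x (t * T x)) ∧
      Function.Bijective k :=
  torus_to_flow_bijective_general Φ S law hgs T hT Pr
end

section
/- Let (Φ,X) be a flow with global Poincaré section S. Define k([x,t]) := Φ(x, t·T_Φ(x)) and τ([x,t],s) := ∫₀^{s+t} R_Φ(x)(u) du − t·T_Φ(x), where R_Φ(x)(u) := ∑_{i∈ℤ} T_Φ((PΦ)^i(x))·χ_{[i,i+1)}(u). Then for all x ∈ S, 0 ≤ t < 1, and s ∈ ℝ: k(ΣPΦ([x,t],s)) = Φ(k([x,t]), τ([x,t],s)); that is, (k,τ) is a weak morphism from the suspension of the Poincaré map to the original flow. -/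
open Set Function Topology

/-!
Write `g x t = ∫₀ᵗ R_Φ(x)` and let `k` send every representative `(x, t)` to `Φ(x, g x t)`.
Since `R_Φ(x)(u + 1) = R_Φ(Px)(u)` and `R_Φ(x) = T x` on `[0, 1)`, we get
`g x t = T x + g (Px) (t - 1)`; as `Px = Φ(x, T x)`, the flow law makes `k` constant on the
classes `(x, t) ∼ (Px, t - 1)`. On each strip `S × [n, n + 1]` the function `g` is affine in `t`
with coefficients continuous in `x`, so `k` is continuous. Finally `g x t = t · T x` for
`t ∈ [0, 1]`, so `τ([x,t], s) = g x (s + t) - g x t` and the morphism identity is the flow law.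
-/

open Filter MeasureTheory

namespace Homeomorph

variable {Y : Type*} [TopologicalSpace Y]

theorem toEquiv_zpow (f : Y ≃ₜ Y) (n : ℤ) : (f ^ n).toEquiv = f.toEquiv ^ n :=
  map_zpow (⟨⟨Homeomorph.toEquiv, rfl⟩, fun _ _ => rfl⟩ : (Y ≃ₜ Y) →* Equiv.Perm Y) f n

end Homeomorph

theorem continuous_of_continuousOn_snd_preimage_Icc_intCast {Y Z : Type*} [TopologicalSpace Y]
    [TopologicalSpace Z] {f : Y × ℝ → Z}
    (hf : ∀ n : ℤ, ContinuousOn f (Prod.snd ⁻¹' Icc (n : ℝ) (n + 1))) : Continuous f := by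
  have hlf : LocallyFinite fun n : ℤ => Icc (n : ℝ) (n + 1) :=
    locallyFinite_Icc_of_tendsto tendsto_intCast_atTop_atTop
      (tendsto_atBot_add_const_right _ 1 (tendsto_intCast_atBot_iff.2 tendsto_id))
  refine (hlf.preimage_continuous continuous_snd).continuous ?_
    (fun n => isClosed_Icc.preimage continuous_snd) hf
  exact eq_univ_of_forall fun p =>
    mem_iUnion.2 ⟨⌊p.2⌋, Int.floor_le _, (Int.lt_floor_add_one _).le⟩

section Rfun

variable {X : Type*} [TopologicalSpace X] {S : Set X} (T : X → ℝ) (Pr : ↥S ≃ₜ ↥S)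

theorem Rfun_apply (x : ↥S) (u : ℝ) : Rfun T Pr x u = T ((Pr ^ ⌊u⌋) x) := by
  rw [Rfun, ← Homeomorph.toEquiv_zpow]
  rfl

theorem Rfun_add_one (x : ↥S) (u : ℝ) : Rfun T Pr x (u + 1) = Rfun T Pr (Pr x) u := by
  rw [Rfun_apply, Rfun_apply, Int.floor_add_one, zpow_add_one, Homeomorph.mul_apply]

theorem measurable_Rfun (x : ↥S) : Measurable (Rfun T Pr x) := by
  rw [funext (Rfun_apply T Pr x)]
  exact (measurable_from_top (f := fun i : ℤ => T ((Pr ^ i) x))).comp Int.measurable_floor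

theorem intervalIntegrable_Rfun (x : ↥S) (a b : ℝ) :
    IntervalIntegrable (Rfun T Pr x) volume a b := by
  refine IntegrableOn.intervalIntegrable <| Measure.integrableOn_of_bounded
    (M := ∑ i ∈ Finset.Icc ⌊min a b⌋ ⌊max a b⌋, |T ((Pr ^ i) x)|) measure_Icc_lt_top.ne
    (measurable_Rfun T Pr x).aestronglyMeasurable ?_
  filter_upwards [ae_restrict_mem measurableSet_Icc] with u hu
  rw [Rfun_apply, Real.norm_eq_abs]
  exact Finset.single_le_sum (f := fun i => |T ((Pr ^ i) x)|) (fun _ _ => abs_nonneg _)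
    (Finset.mem_Icc.2 ⟨Int.floor_mono hu.1, Int.floor_mono hu.2⟩)

theorem integral_Rfun_of_mem_Icc (x : ↥S) (n : ℤ) {a b : ℝ} (ha : a ∈ Icc (n : ℝ) (n + 1))
    (hb : b ∈ Icc (n : ℝ) (n + 1)) :
    ∫ u in a..b, Rfun T Pr x u = (b - a) * T ((Pr ^ n) x) := by
  rw [← smul_eq_mul, ← intervalIntegral.integral_const]
  refine intervalIntegral.integral_congr_ae ?_
  filter_upwards [compl_mem_ae_iff.2 (measure_singleton ((n : ℝ) + 1))] with u hu hab
  have hu' : u ∈ Ioc (n : ℝ) (n + 1) := Ioc_subset_Ioc (le_min ha.1 hb.1) (max_le ha.2 hb.2) hab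
  rw [Rfun_apply, Int.floor_eq_iff.2 ⟨hu'.1.le, hu'.2.lt_of_ne hu⟩]

theorem integral_Rfun_eq_mul_of_mem_Icc (x : ↥S) {t : ℝ} (ht : t ∈ Icc (0 : ℝ) 1) :
    ∫ u in (0 : ℝ)..t, Rfun T Pr x u = t * T x := by
  simpa using integral_Rfun_of_mem_Icc T Pr x 0 (a := 0) (by simp) (by simpa using ht)

theorem integral_Rfun_eq_add_of_mem_Icc (x : ↥S) (n : ℤ) {t : ℝ} (ht : t ∈ Icc (n : ℝ) (n + 1)) :
    ∫ u in (0 : ℝ)..t, Rfun T Pr x u =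
      (∫ u in (0 : ℝ)..(n : ℝ), Rfun T Pr x u) + (t - n) * T ((Pr ^ n) x) := by
  rw [← intervalIntegral.integral_add_adjacent_intervals (intervalIntegrable_Rfun T Pr x 0 n)
    (intervalIntegrable_Rfun T Pr x n t),
    integral_Rfun_of_mem_Icc T Pr x n (left_mem_Icc.2 (by linarith)) ht]

theorem integral_Rfun_eq_add_integral_sub_one (x : ↥S) (t : ℝ) :
    ∫ u in (0 : ℝ)..t, Rfun T Pr x u = T x + ∫ u in (0 : ℝ)..(t - 1), Rfun T Pr (Pr x) u := by
  have hshift :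
      ∫ u in (0 : ℝ)..(t - 1), Rfun T Pr (Pr x) u = ∫ u in (1 : ℝ)..t, Rfun T Pr x u := by
    simp_rw [← Rfun_add_one]
    rw [intervalIntegral.integral_comp_add_right]
    norm_num
  rw [hshift, ← intervalIntegral.integral_add_adjacent_intervals
    (intervalIntegrable_Rfun T Pr x 0 1) (intervalIntegrable_Rfun T Pr x 1 t),
    integral_Rfun_eq_mul_of_mem_Icc T Pr x (right_mem_Icc.2 zero_le_one), one_mul]

variable {T} (hTc : ContinuousOn T S)
include hTc

theorem continuous_integral_Rfun_intCast (n : ℤ) :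
    Continuous fun x : ↥S => ∫ u in (0 : ℝ)..(n : ℝ), Rfun T Pr x u := by
  have step (m : ℤ) (x : ↥S) : ∫ u in (0 : ℝ)..((m + 1 : ℤ) : ℝ), Rfun T Pr x u =
      (∫ u in (0 : ℝ)..(m : ℝ), Rfun T Pr x u) + T ((Pr ^ m) x) := by
    rw [Int.cast_add, Int.cast_one, integral_Rfun_eq_add_of_mem_Icc T Pr x m ⟨by linarith, le_rfl⟩,
      add_sub_cancel_left, one_mul]
  have hT (m : ℤ) : Continuous fun x : ↥S => T ((Pr ^ m) x) :=
    hTc.domRestrict.comp (Pr ^ m).continuous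
  induction n using Int.induction_on with
  | zero => simpa using continuous_const
  | succ m ih => exact (ih.add (hT m)).congr fun x => (step m x).symm
  | pred m ih =>
    refine (ih.sub (hT (-m - 1))).congr fun x => ?_
    have h := step (-m - 1) x
    rw [sub_add_cancel] at h
    rw [Pi.sub_apply, h, add_sub_cancel_right]

theorem continuous_integral_Rfun :
    Continuous fun p : ↥S × ℝ => ∫ u in (0 : ℝ)..p.2, Rfun T Pr p.1 u :=
  continuous_of_continuousOn_snd_preimage_Icc_intCast fun n =>
    (((continuous_integral_Rfun_intCast Pr hTc n).comp continuous_fst).add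
      ((continuous_snd.sub continuous_const).mul
        ((hTc.domRestrict.comp (Pr ^ n).continuous).comp continuous_fst))).continuousOn.congr
      fun p hp => integral_Rfun_eq_add_of_mem_Icc T Pr p.1 n hp

end Rfun

theorem FlowLaw.apply_integral_Rfun_eq_of_mtRel {X : Type*} [TopologicalSpace X]
    {Φ : X → ℝ → X} {S : Set X} {T : X → ℝ} {Pr : ↥S ≃ₜ ↥S} (law : FlowLaw Φ)
    (hPr : ∀ x : ↥S, (Pr x : X) = Φ x (T x)) {p q : ↥S × ℝ} (h : MTRel Pr p q) :
    Φ p.1 (∫ u in (0 : ℝ)..p.2, Rfun T Pr p.1 u) =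
      Φ q.1 (∫ u in (0 : ℝ)..q.2, Rfun T Pr q.1 u) := by
  obtain ⟨hq₁, hq₂⟩ := h
  rw [hq₁, hq₂, hPr, law.map_add, integral_Rfun_eq_add_integral_sub_one]

theorem torus_to_flow_weak_morphism_general {X : Type*} [TopologicalSpace X]
    (Φ : X → ℝ → X) (S : Set X)
    (law : FlowLaw Φ)
    (T : X → ℝ) (hTc : ContinuousOn T S)
    (Pr : ↥S ≃ₜ ↥S) (hPr : ∀ x : ↥S, (Pr x : X) = Φ x (T x)) :
    ∃ k : MappingTorus Pr → X,
      (∀ (x : ↥S) (t : ℝ), 0 ≤ t → t < 1 → k (mtk Pr x t) = Φ x (t * T x)) ∧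
      Continuous k ∧
      ∀ (x : ↥S) (t : ℝ), 0 ≤ t → t < 1 → ∀ s : ℝ,
        k (susp Pr (mtk Pr x t) s) = Φ (k (mtk Pr x t)) (tauTime T Pr x t s)   := by
  refine ⟨Quot.lift (fun p : ↥S × ℝ => Φ p.1 (∫ u in (0 : ℝ)..p.2, Rfun T Pr p.1 u))
      fun _ _ => law.apply_integral_Rfun_eq_of_mtRel hPr, fun x t h₀ h₁ => ?_,
    continuous_quot_lift _ <| law.cont.comp <|
      (continuous_subtype_val.comp continuous_fst).prodMk (continuous_integral_Rfun Pr hTc),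
    fun x t h₀ h₁ s => ?_⟩
  · exact congrArg (Φ x) (integral_Rfun_eq_mul_of_mem_Icc T Pr x ⟨h₀, h₁.le⟩)
  · change Φ x (∫ u in (0 : ℝ)..(t + s), Rfun T Pr x u) =
      Φ (Φ x (∫ u in (0 : ℝ)..t, Rfun T Pr x u)) (tauTime T Pr x t s)
    rw [law.map_add, tauTime, integral_Rfun_eq_mul_of_mem_Icc T Pr x ⟨h₀, h₁.le⟩, add_comm s t,
      add_sub_cancel]

/-- with `k([x,t]) = Φ(x, t·T(x))` and
`τ([x,t],s) = ∫₀^{s+t} R_Φ(x)(u) du − t·T(x)`, one has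
`k(ΣPΦ([x,t],s)) = Φ(k([x,t]), τ([x,t],s))` for all `x ∈ S`, `0 ≤ t < 1`, `s ∈ ℝ`;
together with continuity of `k`, `(k,τ)` is a weak morphism from the suspension of the
Poincaré map to the original flow. -/
theorem torus_to_flow_weak_morphism {X : Type*} [TopologicalSpace X] [T2Space X]
    [SecondCountableTopology X] {n : ℕ} (Φ : X → ℝ → X) (S : Set X)
    (law : FlowLaw Φ) (hgs : IsGlobalSection n Φ S)
    (T : X → ℝ) (hT : IsFirstReturn Φ S T) (hTc : ContinuousOn T S)
    (Pr : ↥S ≃ₜ ↥S) (hPr : ∀ x : ↥S, (Pr x : X) = Φ x (T x)) :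
    ∃ k : MappingTorus Pr → X,
      (∀ (x : ↥S) (t : ℝ), 0 ≤ t → t < 1 → k (mtk Pr x t) = Φ x (t * T x)) ∧
      Continuous k ∧
      ∀ (x : ↥S) (t : ℝ), 0 ≤ t → t < 1 → ∀ s : ℝ,
        k (susp Pr (mtk Pr x t) s) = Φ (k (mtk Pr x t)) (tauTime T Pr x t s) :=
  torus_to_flow_weak_morphism_general Φ S law T hTc Pr hPr
end

section
/- If (h,σ) : (Φ₁,X₁,S₁) → (Φ₂,X₂,S₂) is a rate-preserving weak morphism of flows with global Poincaré sections, then σ(x, t·T_{Φ₁}(x)) = t·σ(x, T_{Φ₁}(x)) for all x ∈ S₁ and 0 ≤ t < 1. -/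
open Set Function Topology

/-- A section-preserving weak morphism `(h,σ)` between flows with global Poincaré
sections is *rate-preserving* if
`σ(Φ₁(x, t·T₁ x), ∫₀^{s+t} R_{Φ₁}(x) du − t·T₁ x) = ∫₀^{s+t} R_{Φ₂}(h x) du − t·T₂(h x)`
for all `x ∈ S₁`, `0 ≤ t < 1`, `s ∈ ℝ`. -/
def RatePreserving {X₁ X₂ : Type*} [TopologicalSpace X₁] [TopologicalSpace X₂]
    (Φ₁ : X₁ → ℝ → X₁) {S₁ : Set X₁} {S₂ : Set X₂}
    (T₁ : X₁ → ℝ) (Pr₁ : ↥S₁ ≃ₜ ↥S₁) (T₂ : X₂ → ℝ) (Pr₂ : ↥S₂ ≃ₜ ↥S₂)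
    (h : X₁ → X₂) (σ : X₁ → ℝ → ℝ) (hS : Set.MapsTo h S₁ S₂) : Prop :=
  ∀ (x : ↥S₁) (t : ℝ), 0 ≤ t → t < 1 → ∀ s : ℝ,
    σ (Φ₁ x (t * T₁ x)) (tauTime T₁ Pr₁ x t s) = tauTime T₂ Pr₂ ⟨h x, hS x.2⟩ t s

/-! Rate preservation at `t = 0` reads `σ(x, ∫₀^s R_{Φ₁}(x)) = ∫₀^s R_{Φ₂}(h x)`. For
`0 ≤ s ≤ 1` both step functions are constant on `[0, s)`, equal to `T₁ x` and `T₂ (h x)`, so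
`σ(x, s·T₁ x) = s·T₂(h x)`; comparing `s = t` with `s = 1` gives the linearity. -/

section ReturnSteps

variable {X : Type*} [TopologicalSpace X] (T : X → ℝ) {S : Set X} (Pr : ↥S ≃ₜ ↥S) (x : ↥S)

lemma Rfun_of_mem_Ico {u : ℝ} (hu : u ∈ Ico (0 : ℝ) 1) : Rfun T Pr x u = T x := by
  rw [Rfun, Int.floor_eq_zero_iff.mpr hu, zpow_zero, Equiv.Perm.coe_one, id]

lemma integral_Rfun_of_le_one {s : ℝ} (hs₀ : 0 ≤ s) (hs₁ : s ≤ 1) :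
    ∫ u in (0 : ℝ)..s, Rfun T Pr x u = s * T x := by
  have hconst : (Ioo 0 s).EqOn (Rfun T Pr x) fun _ => T x := fun u hu =>
    Rfun_of_mem_Ico T Pr x ⟨hu.1.le, hu.2.trans_le hs₁⟩
  rw [intervalIntegral.integral_congr_Ioo_of_le hs₀ hconst, intervalIntegral.integral_const,
    sub_zero, smul_eq_mul]

lemma tauTime_zero_of_le_one {s : ℝ} (hs₀ : 0 ≤ s) (hs₁ : s ≤ 1) :
    tauTime T Pr x 0 s = s * T x := by
  rw [tauTime, add_zero, zero_mul, sub_zero, integral_Rfun_of_le_one T Pr x hs₀ hs₁]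

end ReturnSteps

lemma RatePreserving.apply_mul_returnTime {X₁ X₂ : Type*} [TopologicalSpace X₁]
    [TopologicalSpace X₂] {Φ₁ : X₁ → ℝ → X₁} {S₁ : Set X₁} {S₂ : Set X₂} {T₁ : X₁ → ℝ}
    {Pr₁ : ↥S₁ ≃ₜ ↥S₁} {T₂ : X₂ → ℝ} {Pr₂ : ↥S₂ ≃ₜ ↥S₂} {h : X₁ → X₂} {σ : X₁ → ℝ → ℝ}
    {hS : MapsTo h S₁ S₂} (hrp : RatePreserving Φ₁ T₁ Pr₁ T₂ Pr₂ h σ hS)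
    (law₁ : FlowLaw Φ₁) (x : ↥S₁) {s : ℝ} (hs₀ : 0 ≤ s) (hs₁ : s ≤ 1) :
    σ x (s * T₁ x) = s * T₂ (h x) := by
  have hrate := hrp x 0 le_rfl one_pos s
  rwa [zero_mul, law₁.map_zero, tauTime_zero_of_le_one T₁ Pr₁ x hs₀ hs₁,
    tauTime_zero_of_le_one T₂ Pr₂ _ hs₀ hs₁] at hrate

theorem ratePreserving_linear_on_section_general {X₁ X₂ : Type*}
    [TopologicalSpace X₁] [TopologicalSpace X₂]
    (Φ₁ : X₁ → ℝ → X₁) (S₁ : Set X₁) (S₂ : Set X₂) (law₁ : FlowLaw Φ₁)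
    (T₁ : X₁ → ℝ) (T₂ : X₂ → ℝ) (Pr₁ : ↥S₁ ≃ₜ ↥S₁) (Pr₂ : ↥S₂ ≃ₜ ↥S₂)
    (h : X₁ → X₂) (σ : X₁ → ℝ → ℝ) (hS : Set.MapsTo h S₁ S₂)
    (hrp : RatePreserving Φ₁ T₁ Pr₁ T₂ Pr₂ h σ hS) :
    ∀ (x : ↥S₁) (t : ℝ), 0 ≤ t → t < 1 →
      σ x (t * T₁ x) = t * σ x (T₁ x) := by
  intro x t ht₀ ht₁
  have hfull := hrp.apply_mul_returnTime law₁ x zero_le_one le_rfl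
  rw [one_mul, one_mul] at hfull
  rw [hrp.apply_mul_returnTime law₁ x ht₀ ht₁.le, hfull]

/-- a rate-preserving section-preserving weak morphism `(h,σ)` satisfies
`σ(x, t·T₁ x) = t·σ(x, T₁ x)` for all `x ∈ S₁` and `0 ≤ t < 1`. -/
theorem ratePreserving_linear_on_section {X₁ X₂ : Type*}
    [TopologicalSpace X₁] [T2Space X₁] [SecondCountableTopology X₁]
    [TopologicalSpace X₂] [T2Space X₂] [SecondCountableTopology X₂] {n₁ n₂ : ℕ}
    (Φ₁ : X₁ → ℝ → X₁) (S₁ : Set X₁) (Φ₂ : X₂ → ℝ → X₂) (S₂ : Set X₂)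
    (law₁ : FlowLaw Φ₁) (law₂ : FlowLaw Φ₂)
    (hgs₁ : IsGlobalSection n₁ Φ₁ S₁) (hgs₂ : IsGlobalSection n₂ Φ₂ S₂)
    (T₁ : X₁ → ℝ) (T₂ : X₂ → ℝ)
    (hT₁ : IsFirstReturn Φ₁ S₁ T₁) (hT₂ : IsFirstReturn Φ₂ S₂ T₂)
    (Pr₁ : ↥S₁ ≃ₜ ↥S₁) (hPr₁ : ∀ x : ↥S₁, (Pr₁ x : X₁) = Φ₁ x (T₁ x))
    (Pr₂ : ↥S₂ ≃ₜ ↥S₂) (hPr₂ : ∀ x : ↥S₂, (Pr₂ x : X₂) = Φ₂ x (T₂ x))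
    (h : X₁ → X₂) (σ : X₁ → ℝ → ℝ) (hw : IsWeakMorphism Φ₁ Φ₂ h σ)
    (hpre : h ⁻¹' S₂ = S₁) (hS : Set.MapsTo h S₁ S₂)
    (hrp : RatePreserving Φ₁ T₁ Pr₁ T₂ Pr₂ h σ hS) :
    ∀ (x : ↥S₁) (t : ℝ), 0 ≤ t → t < 1 →
      σ x (t * T₁ x) = t * σ x (T₁ x) :=
  ratePreserving_linear_on_section_general Φ₁ S₁ S₂ law₁ T₁ T₂ Pr₁ Pr₂ h σ hS hrp
end

section
/- For any map dynamical system (f,X), the unit map l : X → (X_f)₀, l(x) := [x,0], is a morphism from (f,X) to the Poincaré map of the suspension of f, i.e., l∘f = P(Σf)∘l, and moreover l is a homeomorphism onto the zero section (X_f)₀. Conversely, for a flow (Φ,X) with global Poincaré section S, the counit satisfies the triangle identity P(k) ∘ l_{P(Φ,X,S)} = id_S, where k([x,0]) = Φ(x,0) = x; that is, the composite S → (S_{PΦ})₀ → S is the identity. -/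
open Set Function Topology

/-!
The identification `(x, t + 1) ∼ (f x, t)` generates the orbit relation of the `ℤ`-action
`n • (x, t) = (fⁿ x, t - n)` on `X × ℝ`. Hence the quotient map to the mapping torus is open and
injective on every horizontal strip of width one, so each slice `x ↦ [x, t]` is an embedding,
and `[x, t]` lies on the zero section exactly when `t` is an integer; this gives the unit, its
first return time `1` and its return map `f`. The triangle identity reduces to `Φ(x, 0) = x`.
-/

namespace MappingTorus

variable {X : Type*} [TopologicalSpace X] (f : X ≃ₜ X)

theorem mtk_add_one (x : X) (t : ℝ) : mtk f x (t + 1) = mtk f (f x) t :=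
  Quot.sound ⟨rfl, by ring⟩

theorem mtk_add_intCast (n : ℤ) (x : X) (t : ℝ) : mtk f x (t + n) = mtk f ((f ^ n) x) t := by
  induction n using Int.induction_on generalizing x with
  | zero => simp
  | succ k ih =>
    rw [zpow_add_one, Homeomorph.mul_apply, ← ih, ← mtk_add_one]
    push_cast
    ring_nf
  | pred k ih =>
    have hstep := mtk_add_one f (f.symm x) (t + ↑(-↑k - 1 : ℤ))
    rw [Homeomorph.apply_symm_apply] at hstep
    rw [zpow_sub_one, Homeomorph.mul_apply, ← ih, Homeomorph.inv_apply, ← hstep]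
    push_cast
    ring_nf

theorem mtk_eq_mtk_iff {x y : X} {t s : ℝ} :
    mtk f x t = mtk f y s ↔ ∃ n : ℤ, y = (f ^ n) x ∧ s = t - n := by
  constructor
  · intro h
    let R : X × ℝ → X × ℝ → Prop := fun p q => ∃ n : ℤ, q.1 = (f ^ n) p.1 ∧ q.2 = p.2 - n
    have hR : Equivalence R :=
      { refl := fun p => ⟨0, by simp, by simp⟩
        symm := fun ⟨n, h₁, h₂⟩ => ⟨-n, by simp [h₁, zpow_neg], by push_cast; linarith⟩
        trans := fun ⟨m, h₁, h₂⟩ ⟨n, h₃, h₄⟩ =>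
          ⟨n + m, by rw [h₃, h₁, zpow_add, Homeomorph.mul_apply], by push_cast; linarith⟩ }
    have hgen : MTRel f ≤ R := fun _ _ ⟨h₁, h₂⟩ => ⟨1, by simpa using h₁, by simpa using h₂⟩
    exact hR.eqvGen_iff.mp <| Relation.EqvGen.mono hgen _ _ (Quot.eqvGen_exact h)
  · rintro ⟨n, rfl, rfl⟩
    rw [← mtk_add_intCast, sub_add_cancel]

theorem mtk_mem_zeroSection_iff {x : X} {t : ℝ} :
    mtk f x t ∈ zeroSection f ↔ ∃ n : ℤ, t = n := by
  constructor
  · rintro ⟨y, hy⟩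
    obtain ⟨n, -, hn⟩ := (mtk_eq_mtk_iff f).mp hy
    exact ⟨n, by linarith⟩
  · rintro ⟨n, rfl⟩
    exact ⟨(f ^ n) x, by rw [← zero_add (n : ℝ), mtk_add_intCast]⟩

theorem susp_mtk (x : X) (t s : ℝ) : susp f (mtk f x t) s = mtk f x (t + s) := rfl

theorem isOpenMap_mk : IsOpenMap (Quot.mk (MTRel f)) := by
  intro U hU
  let shift (n : ℤ) (p : X × ℝ) : X × ℝ := ((f ^ n) p.1, p.2 - n)
  have hsat : Quot.mk (MTRel f) ⁻¹' (Quot.mk (MTRel f) '' U) = ⋃ n : ℤ, shift n ⁻¹' U := by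
    ext q
    simp only [mem_preimage, mem_image, mem_iUnion]
    constructor
    · rintro ⟨p, hp, hpq⟩
      obtain ⟨n, h₁, h₂⟩ := (mtk_eq_mtk_iff f).mp hpq.symm
      exact ⟨n, by rwa [show shift n q = p from Prod.ext h₁.symm h₂.symm]⟩
    · rintro ⟨n, hn⟩
      exact ⟨shift n q, hn, ((mtk_eq_mtk_iff f).mpr ⟨n, rfl, rfl⟩).symm⟩
  rw [isOpen_coinduced, hsat]
  exact isOpen_iUnion fun n => hU.preimage <|
    ((f ^ n).continuous.comp continuous_fst).prodMk (continuous_snd.sub continuous_const)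

theorem injOn_mk_strip (a : ℝ) : InjOn (Quot.mk (MTRel f)) (univ ×ˢ Ioo a (a + 1)) := by
  rintro ⟨x, t⟩ ⟨-, ht⟩ ⟨y, s⟩ ⟨-, hs⟩ h
  obtain ⟨n, h₁, h₂⟩ := (mtk_eq_mtk_iff f).mp h
  simp only [mem_Ioo] at ht hs
  have hn : n = 0 := by
    have : -1 < (n : ℝ) ∧ (n : ℝ) < 1 := ⟨by linarith, by linarith⟩
    have : -1 < n ∧ n < 1 := by exact_mod_cast this
    omega
  subst hn
  simp only [zpow_zero, Homeomorph.one_apply, Int.cast_zero, sub_zero] at h₁ h₂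
  rw [h₁, h₂]

theorem isEmbedding_mtk (t : ℝ) : IsEmbedding fun x : X => mtk f x t := by
  let W : Set (X × ℝ) := univ ×ˢ Ioo (t - 1 / 2) (t - 1 / 2 + 1)
  have hW : IsOpen W := isOpen_univ.prod isOpen_Ioo
  have hslice : ∀ x : X, (x, t) ∈ W := fun x => ⟨mem_univ x, by constructor <;> linarith⟩
  have hstrip : IsOpenEmbedding (W.domRestrict (Quot.mk (MTRel f))) :=
    .of_continuous_injective_isOpenMap (continuous_quot_mk.comp continuous_subtype_val)
      (injOn_mk_strip f _).injective ((isOpenMap_mk f).comp hW.isOpenMap_subtype_val)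
  exact hstrip.isEmbedding.comp ((isEmbedding_prodMkLeft t).codRestrict W hslice)

end MappingTorus

theorem suspension_poincare_triangle_general {X Y : Type*} [TopologicalSpace X]
    [TopologicalSpace Y]
    (f : X ≃ₜ X)
    (Φ : Y → ℝ → Y) (S : Set Y) (law : FlowLaw Φ)
    (T : Y → ℝ)
    (Pr : ↥S ≃ₜ ↥S) :
    (Topology.IsEmbedding fun x : X => mtk f x 0) ∧
    (Set.range fun x : X => mtk f x 0) = zeroSection f ∧
    (∀ x : X, susp f (mtk f x 0) 1 = mtk f (f x) 0) ∧
    (∀ x : X, ∀ t ∈ Set.Ioo (0:ℝ) 1, susp f (mtk f x 0) t ∉ zeroSection f) ∧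
    ∀ k : MappingTorus Pr → Y,
      (∀ (x : ↥S) (t : ℝ), 0 ≤ t → t < 1 → k (mtk Pr x t) = Φ x (t * T x)) →
      ∀ x : ↥S, k (mtk Pr x 0) = x := by
  refine ⟨MappingTorus.isEmbedding_mtk f 0,
    Set.ext fun _ => exists_congr fun _ => eq_comm, ?_, ?_, ?_⟩
  · intro x
    rw [MappingTorus.susp_mtk, zero_add, ← zero_add 1, MappingTorus.mtk_add_one]
  · rintro x t ⟨ht₀, ht₁⟩ hzero
    rw [MappingTorus.susp_mtk, zero_add, MappingTorus.mtk_mem_zeroSection_iff] at hzero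
    obtain ⟨n, rfl⟩ := hzero
    have : 0 < n ∧ n < 1 := ⟨by exact_mod_cast ht₀, by exact_mod_cast ht₁⟩
    omega
  · intro k hk x
    rw [hk x 0 le_rfl one_pos, zero_mul, law.map_zero]

/-- the unit and the triangle identity of the suspension/Poincaré-map
adjunction.  (a) For a map dynamical system `(f,X)`, `l(x) = [x,0]` is a homeomorphism
onto the zero section of the mapping torus which intertwines `f` with the Poincaré map
of the suspension flow (whose first return to the zero section happens at time `1`).
(b) For a flow `(Φ,X)` with global Poincaré section `S`, the composite
`S → (S_{PΦ})₀ → S`, `x ↦ k([x,0]) = Φ(x,0) = x`, is the identity. -/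
theorem suspension_poincare_triangle {X Y : Type*} [TopologicalSpace X]
    [TopologicalSpace Y] [T2Space Y] [SecondCountableTopology Y] {n : ℕ}
    (f : X ≃ₜ X)
    (Φ : Y → ℝ → Y) (S : Set Y) (law : FlowLaw Φ) (hgs : IsGlobalSection n Φ S)
    (T : Y → ℝ) (hT : IsFirstReturn Φ S T)
    (Pr : ↥S ≃ₜ ↥S) (hPr : ∀ x : ↥S, (Pr x : Y) = Φ x (T x)) :
    (Topology.IsEmbedding fun x : X => mtk f x 0) ∧
    (Set.range fun x : X => mtk f x 0) = zeroSection f ∧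
    (∀ x : X, susp f (mtk f x 0) 1 = mtk f (f x) 0) ∧
    (∀ x : X, ∀ t ∈ Set.Ioo (0:ℝ) 1, susp f (mtk f x 0) t ∉ zeroSection f) ∧
    ∀ k : MappingTorus Pr → Y,
      (∀ (x : ↥S) (t : ℝ), 0 ≤ t → t < 1 → k (mtk Pr x t) = Φ x (t * T x)) →
      ∀ x : ↥S, k (mtk Pr x 0) = x :=
  suspension_poincare_triangle_general f Φ S law T Pr
end
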